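/- Let C be a self-dual Z4-code of length 24 with minimum Lee weight 10. Then C is a Type I Z4-code and its minimum Euclidean weight is 12. Moreover, every codeword x of C with Lee weight 10 satisfies n_1(x) + n_3(x) = 8 and n_2(x) = 1. -/

import Mathlib

open Finset

namespace Z4Note

variable {ι : Type*} [Fintype ι]

/-- Hamming weight of a binary vector. -/
def hWt (x : ι → ZMod 2) : ℕ := (Finset.univ.filter fun i => x i ≠ 0).card

/-- Lee value of an element of `ZMod 4`:  0 ↦ 0, 1 ↦ 1, 2 ↦ 2, 3 ↦ 1. -/
def leeVal (a : ZMod 4) : ℕ := min a.val (4 - a.val)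

/-- Lee weight `n₁(x) + 2 n₂(x) + n₃(x)`. -/
def leeWt (x : ι → ZMod 4) : ℕ := ∑ i, leeVal (x i)

/-- Euclidean weight `n₁(x) + 4 n₂(x) + n₃(x)`. -/
def eucWt (x : ι → ZMod 4) : ℕ := ∑ i, (leeVal (x i)) ^ 2

/-- Number of coordinates of `x` equal to `a`. -/
def nCount (a : ZMod 4) (x : ι → ZMod 4) : ℕ := (Finset.univ.filter fun i => x i = a).card

/-- Dual of a `ZMod 4`-code (as a set), w.r.t. the standard inner product. -/
def dualZ4 (C : Set (ι → ZMod 4)) : Set (ι → ZMod 4) :=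
  {x | ∀ y ∈ C, ∑ i, x i * y i = 0}

/-- Dual of a binary code (as a set), w.r.t. the standard inner product. -/
def dual2 (C : Set (ι → ZMod 2)) : Set (ι → ZMod 2) :=
  {x | ∀ y ∈ C, ∑ i, x i * y i = 0}

/-- A `ZMod 4`-code is self-dual if it equals its dual. -/
def SelfDualZ4 (C : Submodule (ZMod 4) (ι → ZMod 4)) : Prop :=
  (C : Set (ι → ZMod 4)) = dualZ4 (C : Set (ι → ZMod 4))

/-- A binary code is self-dual if it equals its dual. -/
def SelfDual2 (D : Submodule (ZMod 2) (ι → ZMod 2)) : Prop :=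
  (D : Set (ι → ZMod 2)) = dual2 (D : Set (ι → ZMod 2))

/-- Coordinatewise reduction modulo 2. -/
def res2 (x : ι → ZMod 4) : ι → ZMod 2 :=
  fun i => ZMod.castHom (by norm_num : (2:ℕ) ∣ 4) (ZMod 2) (x i)

/-- The residue code `C⁽¹⁾ = {c mod 2 : c ∈ C}`. -/
def residue (C : Set (ι → ZMod 4)) : Set (ι → ZMod 2) := res2 '' C

/-- Minimum Lee weight among nonzero codewords. -/
noncomputable def minLee (C : Set (ι → ZMod 4)) : ℕ := sInf {d | ∃ x ∈ C, x ≠ 0 ∧ leeWt x = d}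

/-- Minimum Euclidean weight among nonzero codewords. -/
noncomputable def minEuc (C : Set (ι → ZMod 4)) : ℕ := sInf {d | ∃ x ∈ C, x ≠ 0 ∧ eucWt x = d}

/-- Minimum Hamming weight among nonzero codewords of a binary code. -/
noncomputable def minHam (C : Set (ι → ZMod 2)) : ℕ := sInf {d | ∃ x ∈ C, x ≠ 0 ∧ hWt x = d}

/-- A binary code is doubly even if all weights are divisible by 4. -/
def DoublyEven (C : Set (ι → ZMod 2)) : Prop := ∀ x ∈ C, 4 ∣ hWt x

/-- A binary code is singly even if some codeword has weight not divisible by 4. -/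
def SinglyEven (C : Set (ι → ZMod 2)) : Prop := ∃ x ∈ C, ¬ 4 ∣ hWt x

/-- A self-dual `ZMod 4`-code is Type II if all Euclidean weights are divisible by 8. -/
def TypeII (C : Set (ι → ZMod 4)) : Prop := ∀ x ∈ C, 8 ∣ eucWt x

/-- The doubly even subcode of a binary code. -/
def evenSubcode (D : Set (ι → ZMod 2)) : Set (ι → ZMod 2) := {x ∈ D | 4 ∣ hWt x}

/-- The shadow `S = D₀^⊥ \ D` of a binary code. -/
def shadow (D : Set (ι → ZMod 2)) : Set (ι → ZMod 2) := dual2 (evenSubcode D) \ D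

/-- A binary singly even self-dual code is s-extremal if equality holds in the
Bachoc–Gaborit bound relating the minimum weight of the code and of its shadow. -/
def SExtremal (D : Submodule (ZMod 2) (ι → ZMod 2)) : Prop :=
  SelfDual2 D ∧ SinglyEven (D : Set (ι → ZMod 2)) ∧
  ((¬ (Fintype.card ι % 24 = 22 ∧
        minHam (D : Set (ι → ZMod 2)) = 4 * (Fintype.card ι / 24) + 6)) →
      minHam (shadow (D : Set (ι → ZMod 2))) + 2 * minHam (D : Set (ι → ZMod 2)) =
        Fintype.card ι / 2 + 4) ∧
  ((Fintype.card ι % 24 = 22 ∧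
        minHam (D : Set (ι → ZMod 2)) = 4 * (Fintype.card ι / 24) + 6) →
      minHam (shadow (D : Set (ι → ZMod 2))) + 2 * minHam (D : Set (ι → ZMod 2)) =
        Fintype.card ι / 2 + 8)

/-- Equivalence of `ZMod 4`-codes: coordinate permutation together with sign changes. -/
def Z4Equiv (C C' : Set (ι → ZMod 4)) : Prop :=
  ∃ σ : Equiv.Perm ι, ∃ ε : ι → ZMod 4, (∀ i, ε i = 1 ∨ ε i = -1) ∧
    C' = (fun x => fun i => ε i * x (σ i)) '' C

/-- Covering radius of a binary code. -/
noncomputable def covRad (C : Set (ι → ZMod 2)) : ℕ :=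
  sInf {R | ∀ v : ι → ZMod 2, ∃ c ∈ C, hWt (v - c) ≤ R}

/-- Entry `(i,j)` of the circulant matrix with first row `r`. -/
def circEntry {m : ℕ} (r : Fin m → ZMod 4) (i j : Fin m) : ZMod 4 := r (j - i)

/-- Entry `(i,j)` of the negacirculant matrix with first row `r`. -/
def negaEntry {m : ℕ} (r : Fin m → ZMod 4) (i j : Fin m) : ZMod 4 :=
  if i.val ≤ j.val then r (j - i) else - r (j - i)

/-- The bordered part `B` of the generator matrix of a bordered double circulant code. -/
def bdcB {m : ℕ} (α β γ : ZMod 4) (r : Fin m → ZMod 4) :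
    Fin (m+1) → Fin (m+1) → ZMod 4 :=
  Fin.cases (Fin.cases α fun _ => β) (fun i' => Fin.cases γ fun j' => circEntry r i' j')

/-- Row `i` of the generator matrix `(I | B)` of a bordered double circulant code. -/
def bdcRow {m : ℕ} (α β γ : ZMod 4) (r : Fin m → ZMod 4) (i : Fin (m+1)) :
    (Fin (m+1) ⊕ Fin (m+1)) → ZMod 4 :=
  Sum.elim (fun j => if j = i then 1 else 0) (bdcB α β γ r i)

/-- The bordered double circulant code of length `2(m+1)`. -/
def bdcCode {m : ℕ} (α β γ : ZMod 4) (r : Fin m → ZMod 4) :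
    Submodule (ZMod 4) ((Fin (m+1) ⊕ Fin (m+1)) → ZMod 4) :=
  Submodule.span (ZMod 4) (Set.range (bdcRow α β γ r))

/-- The block matrix `[[A, B], [-Bᵀ, Aᵀ]]` built from negacirculant `A`, `B`. -/
def fourNegaM {n : ℕ} (a b : Fin n → ZMod 4) :
    (Fin n ⊕ Fin n) → (Fin n ⊕ Fin n) → ZMod 4
  | Sum.inl i, Sum.inl j => negaEntry a i j
  | Sum.inl i, Sum.inr j => negaEntry b i j
  | Sum.inr i, Sum.inl j => - negaEntry b j i
  | Sum.inr i, Sum.inr j => negaEntry a j i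

/-- Row `i` of the generator matrix `(I | M)` of a four-negacirculant code. -/
def fourNegaRow {n : ℕ} (a b : Fin n → ZMod 4) (i : Fin n ⊕ Fin n) :
    ((Fin n ⊕ Fin n) ⊕ (Fin n ⊕ Fin n)) → ZMod 4 :=
  Sum.elim (fun j => if j = i then 1 else 0) (fourNegaM a b i)

/-- The four-negacirculant code of length `4n`. -/
def fourNegaCode {n : ℕ} (a b : Fin n → ZMod 4) :
    Submodule (ZMod 4) (((Fin n ⊕ Fin n) ⊕ (Fin n ⊕ Fin n)) → ZMod 4) :=
  Submodule.span (ZMod 4) (Set.range (fourNegaRow a b))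

end Z4Note

/-! Self-duality makes `n₁ + n₃` divisible by 4 for every codeword `x`, and since `2x` is a
codeword of Lee weight `2 (n₁ + n₃)`, this number is 0 or at least 5, hence 0 or at least 8.
A codeword of Lee weight 10 therefore has `(n₁ + n₃, n₂) = (8, 1)` or `(0, 5)`. In the second
case it is `2u` for a binary vector `u` of weight 5 orthogonal to the residue code
`D = C mod 2`. Now `D` is doubly even with nonzero weights at least 8, and since `2u ∈ C` for
every `u ⊥ D`, its dual has no nonzero vector of weight below 5; the MacWilliams identities of
`D`, read off coefficientwise through Krawtchouk numbers, then exclude dual vectors of weight 5.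
Finally a codeword of Lee weight 10 has Euclidean weight 12, which is the minimum and is not
divisible by 8. -/

theorem AddChar.map_sum_eq_prod {A M κ : Type*} [AddCommMonoid A] [CommMonoid M]
    (ψ : AddChar A M) (s : Finset κ) (f : κ → A) : ψ (∑ i ∈ s, f i) = ∏ i ∈ s, ψ (f i) := by
  classical
  induction s using Finset.induction_on with
  | empty => simp
  | insert a s ha ih => rw [sum_insert ha, AddChar.map_add_eq_mul, ih, prod_insert ha]

namespace Z4Note

open Polynomial Matrix

variable {ι : Type*} [Fintype ι]

lemma hWt_eq_zero_iff (x : ι → ZMod 2) : hWt x = 0 ↔ x = 0 := by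
  simp [hWt, funext_iff]

lemma hWt_le_card (x : ι → ZMod 2) : hWt x ≤ Fintype.card ι := card_filter_le _ _

lemma hWt_eq_sum_val (x : ι → ZMod 2) : hWt x = ∑ i, (x i).val := by
  have h (t : ZMod 2) : (if t ≠ 0 then 1 else 0) = t.val := by decide +revert
  simp only [hWt, card_filter, h]

def signChar (R : Type*) [CommRing R] : AddChar (ZMod 2) R :=
  AddChar.zmodChar 2 (neg_one_sq : (-1 : R) ^ 2 = 1)

lemma signChar_one (R : Type*) [CommRing R] : signChar R 1 = -1 := by
  simp [signChar, AddChar.zmodChar_apply, ZMod.val_one]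

lemma signChar_eq_one_iff (t : ZMod 2) : signChar ℤ[X] t = 1 ↔ t = 0 := by
  obtain rfl | rfl : t = 0 ∨ t = 1 := by decide +revert
  · simp
  · simp only [signChar_one, one_ne_zero, iff_false]
    norm_num

lemma sum_signChar_mul_X_pow (s : ZMod 2) :
    ∑ t : ZMod 2, signChar ℤ[X] (t * s) * X ^ t.val = if s = 0 then 1 + X else 1 - X := by
  rw [show (univ : Finset (ZMod 2)) = {0, 1} from rfl]
  obtain rfl | rfl : s = 0 ∨ s = 1 := by decide +revert
  · simp [ZMod.val_one]
  · simp [ZMod.val_one, signChar_one, sub_eq_add_neg]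

lemma sum_signChar_dotProduct (D : AddSubgroup (ι → ZMod 2)) [Fintype D] (x : ι → ZMod 2)
    [Decidable (x ∈ dual2 (D : Set (ι → ZMod 2)))] :
    ∑ b : D, signChar ℤ[X] (x ⬝ᵥ b) =
      if x ∈ dual2 (D : Set (ι → ZMod 2)) then (Fintype.card D : ℤ[X]) else 0 := by
  let ψ := (signChar ℤ[X]).compAddMonoidHom
    ((AddMonoidHom.mk' (x ⬝ᵥ ·) (dotProduct_add x)).comp D.subtype)
  have hψ : ψ = 0 ↔ x ∈ dual2 (D : Set (ι → ZMod 2)) := by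
    simp [ψ, AddChar.eq_zero_iff, signChar_eq_one_iff, dual2, dotProduct]
  calc ∑ b : D, signChar ℤ[X] (x ⬝ᵥ b) = ∑ b, ψ b := rfl
    _ = _ := by rw [AddChar.sum_eq_ite]; exact if_congr hψ rfl rfl

section MacWilliams

variable [DecidableEq ι]

lemma sum_signChar_dotProduct_mul_X_pow_hWt (b : ι → ZMod 2) :
    ∑ x, signChar ℤ[X] (x ⬝ᵥ b) * X ^ hWt x
      = (1 - X) ^ hWt b * (1 + X) ^ (Fintype.card ι - hWt b) := by
  calc ∑ x, signChar ℤ[X] (x ⬝ᵥ b) * X ^ hWt x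
      = ∑ x : ι → ZMod 2, ∏ i, signChar ℤ[X] (x i * b i) * X ^ (x i).val := by
        simp only [dotProduct, AddChar.map_sum_eq_prod, hWt_eq_sum_val, prod_pow_eq_pow_sum,
          prod_mul_distrib]
    _ = ∏ i, ∑ t : ZMod 2, signChar ℤ[X] (t * b i) * X ^ t.val := by
        rw [prod_univ_sum]
        rfl
    _ = (1 - X) ^ hWt b * (1 + X) ^ (Fintype.card ι - hWt b) := by
        have hzero : #{i | b i = 0} = Fintype.card ι - hWt b := by
          rw [hWt, ← card_univ, ← card_filter_add_card_filter_not (s := univ) (b · = 0)]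
          simp
        rw [prod_congr rfl fun i _ => sum_signChar_mul_X_pow (b i), prod_ite, prod_const,
          prod_const, mul_comm, hzero]
        rfl

open Classical in
theorem macWilliams_identity (D : AddSubgroup (ι → ZMod 2)) :
    ∑ b : D, (1 - X) ^ hWt (b : ι → ZMod 2) *
        (1 + X) ^ (Fintype.card ι - hWt (b : ι → ZMod 2))
      = (Fintype.card D : ℤ[X]) *
        ∑ x ∈ {x | x ∈ dual2 (D : Set (ι → ZMod 2))}, X ^ hWt x := by
  simp_rw [← sum_signChar_dotProduct_mul_X_pow_hWt]
  rw [sum_comm]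
  simp_rw [← sum_mul, sum_signChar_dotProduct, ite_mul, zero_mul, sum_ite, sum_const_zero,
    add_zero, mul_sum]

def krawtchouk (n j w : ℕ) : ℤ :=
  ∑ s ∈ range (j + 1), (-1) ^ s * w.choose s * (n - w).choose (j - s)

lemma coeff_one_sub_X_pow (w s : ℕ) : ((1 - X : ℤ[X]) ^ w).coeff s = (-1) ^ s * w.choose s := by
  rw [show (1 - X : ℤ[X]) = C (-1) * X + 1 by simp; ring, add_pow, finsetSum_coeff]
  simp_rw [one_pow, mul_one, mul_pow, ← C_pow, mul_assoc, coeff_C_mul, ← Nat.cast_comm,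
    coeff_natCast_mul, coeff_X_pow]
  simp only [mul_ite, mul_zero, mul_one, sum_ite_eq, mem_range, Nat.lt_succ_iff]
  split_ifs with h
  · ring
  · simp [Nat.choose_eq_zero_of_lt (not_le.mp h)]

lemma coeff_one_sub_X_pow_mul_one_add_X_pow (n j w : ℕ) :
    ((1 - X) ^ w * (1 + X) ^ (n - w) : ℤ[X]).coeff j = krawtchouk n j w := by
  rw [coeff_mul, Nat.sum_antidiagonal_eq_sum_range_succ_mk, krawtchouk]
  simp only [coeff_one_sub_X_pow, coeff_one_add_X_pow]

open Classical in
theorem sum_krawtchouk_hWt (D : AddSubgroup (ι → ZMod 2)) (j : ℕ) :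
    ∑ b : D, krawtchouk (Fintype.card ι) j (hWt (b : ι → ZMod 2))
      = Fintype.card D * #{x | x ∈ dual2 (D : Set (ι → ZMod 2)) ∧ hWt x = j} := by
  have h := congrArg (coeff · j) (macWilliams_identity D)
  simp only [finsetSum_coeff, coeff_one_sub_X_pow_mul_one_add_X_pow, coeff_natCast_mul,
    coeff_X_pow, sum_boole] at h
  rw [h, filter_filter]
  simp [eq_comm]

open Classical in
theorem sum_card_hWt_eq_mul_krawtchouk (D : AddSubgroup (ι → ZMod 2)) (S : Finset ℕ)
    (hS : ∀ b ∈ D, hWt b ∈ S) (j : ℕ) :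
    ∑ w ∈ S, (#{b : D | hWt (b : ι → ZMod 2) = w} : ℤ) * krawtchouk (Fintype.card ι) j w
      = Fintype.card D * #{x | x ∈ dual2 (D : Set (ι → ZMod 2)) ∧ hWt x = j} := by
  rw [← sum_krawtchouk_hWt,
    ← sum_fiberwise_of_maps_to (g := fun b : D => hWt (b : ι → ZMod 2)) fun b _ => hS b b.2]
  refine sum_congr rfl fun w _ => ?_
  rw [sum_congr rfl fun b hb => by rw [(mem_filter.mp hb).2], sum_const, nsmul_eq_mul]

end MacWilliams

open Classical in
lemma card_hWt_eq_zero (D : AddSubgroup (ι → ZMod 2)) :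
    #{b : D | hWt (b : ι → ZMod 2) = 0} = 1 := by
  rw [card_eq_one]
  exact ⟨0, by ext b; simp [hWt_eq_zero_iff]⟩

open Classical in
lemma card_mem_dual2_hWt_eq_zero {D : AddSubgroup (ι → ZMod 2)} {d j : ℕ}
    (hdual : ∀ u ∈ dual2 (D : Set (ι → ZMod 2)), u ≠ 0 → d ≤ hWt u) (hj0 : j ≠ 0) (hjd : j < d) :
    #{x | x ∈ dual2 (D : Set (ι → ZMod 2)) ∧ hWt x = j} = 0 := by
  refine card_eq_zero.mpr (filter_eq_empty_iff.mpr fun x _ hx => ?_)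
  have := hdual x hx.1 ((hWt_eq_zero_iff x).not.mp (hx.2 ▸ hj0))
  omega

theorem hWt_ne_five_of_mem_dual2 (hn : Fintype.card ι = 24) (D : AddSubgroup (ι → ZMod 2))
    (hD : ∀ b ∈ D, b ≠ 0 → 4 ∣ hWt b ∧ 8 ≤ hWt b)
    (hdual : ∀ u ∈ dual2 (D : Set (ι → ZMod 2)), u ≠ 0 → 5 ≤ hWt u)
    {u : ι → ZMod 2} (hu : u ∈ dual2 (D : Set (ι → ZMod 2))) : hWt u ≠ 5 := by
  classical
  intro hu5
  have hweights (b) (hb : b ∈ D) : hWt b ∈ ({0, 8, 12, 16, 20, 24} : Finset ℕ) := by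
    have := hn ▸ hWt_le_card b
    have := fun h => hD b hb ((hWt_eq_zero_iff b).not.mp h)
    simp only [mem_insert, mem_singleton]
    omega
  set A : ℕ → ℤ := fun w => #{b : D | hWt (b : ι → ZMod 2) = w}
  set N : ℕ → ℤ := fun j => #{x | x ∈ dual2 (D : Set (ι → ZMod 2)) ∧ hWt x = j}
  have hA0 : A 0 = 1 := by simp only [A, card_hWt_eq_zero, Nat.cast_one]
  have hN (j : ℕ) (hj0 : j ≠ 0) (hj5 : j < 5) : N j = 0 := by
    simp only [N, card_mem_dual2_hWt_eq_zero hdual hj0 hj5, Nat.cast_zero]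
  have hN5 : Fintype.card D * N 5 ≠ 0 :=
    mul_ne_zero (Nat.cast_ne_zero.mpr Fintype.card_ne_zero)
      (Nat.cast_ne_zero.mpr (card_pos.mpr ⟨u, mem_filter.mpr ⟨mem_univ u, hu, hu5⟩⟩).ne')
  -- Three combinations of the identities for j = 1, …, 5: A 20 is 0 or 4 by the second and
  -- divisible by 3 by the third, so it vanishes, and then the first contradicts hN5.
  obtain ⟨h1, h2, h3⟩ : Fintype.card D * N 5 = 8192 * A 20 ∧ A 20 + 4 * A 24 = 4 ∧
      3 * A 12 = 3864 + 649 * A 20 + 3864 * A 24 := by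
    have e (j : ℕ) :
        ∑ w ∈ {0, 8, 12, 16, 20, 24}, A w * krawtchouk 24 j w = Fintype.card D * N j := by
      have := sum_card_hWt_eq_mul_krawtchouk D _ hweights j
      rwa [hn] at this
    have e1 := e 1
    have e2 := e 2
    have e3 := e 3
    have e4 := e 4
    have e5 := e 5
    simp (disch := decide) only [sum_insert, sum_singleton, hA0, hN, krawtchouk, sum_range_succ,
      Nat.choose_eq_descFactorial_div_factorial, Nat.descFactorial, Nat.factorial]
      at e1 e2 e3 e4 e5
    norm_num at e1 e2 e3 e4 e5
    exact ⟨by linear_combination 21 * e3 - e5, by linarith, by linarith⟩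
  have : 0 ≤ A 20 := Nat.cast_nonneg _
  have : 0 ≤ A 24 := Nat.cast_nonneg _
  have hA20 : A 20 = 0 := by omega
  exact hN5 (by rw [h1, hA20, mul_zero])

lemma leeWt_eq (x : ι → ZMod 4) : leeWt x = nCount 1 x + nCount 3 x + 2 * nCount 2 x := by
  have h (a : ZMod 4) : leeVal a =
      (if a = 1 then 1 else 0) + (if a = 3 then 1 else 0) + 2 * (if a = 2 then 1 else 0) := by
    decide +revert
  simp only [leeWt, nCount, h, sum_add_distrib, ← mul_sum, sum_boole, Nat.cast_id]

lemma eucWt_eq (x : ι → ZMod 4) : eucWt x = nCount 1 x + nCount 3 x + 4 * nCount 2 x := by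
  have h (a : ZMod 4) : leeVal a ^ 2 =
      (if a = 1 then 1 else 0) + (if a = 3 then 1 else 0) + 4 * (if a = 2 then 1 else 0) := by
    decide +revert
  simp only [eucWt, nCount, h, sum_add_distrib, ← mul_sum, sum_boole, Nat.cast_id]

lemma leeWt_eq_zero_iff (x : ι → ZMod 4) : leeWt x = 0 ↔ x = 0 := by
  have h (a : ZMod 4) : leeVal a = 0 ↔ a = 0 := by decide +revert
  simp [leeWt, sum_eq_zero_iff, h, funext_iff]

lemma sum_mul_self_eq (x : ι → ZMod 4) :
    ∑ i, x i * x i = ((nCount 1 x + nCount 3 x : ℕ) : ZMod 4) := by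
  have h (a : ZMod 4) :
      a * a = (((if a = 1 then 1 else 0) + (if a = 3 then 1 else 0) : ℕ) : ZMod 4) := by
    decide +revert
  simp only [h, nCount, ← Nat.cast_sum, sum_add_distrib, sum_boole, Nat.cast_id]

lemma leeWt_two_smul (x : ι → ZMod 4) :
    leeWt ((2 : ZMod 4) • x) = 2 * (nCount 1 x + nCount 3 x) := by
  have h (a : ZMod 4) : leeVal (2 * a) =
      2 * ((if a = 1 then 1 else 0) + (if a = 3 then 1 else 0)) := by
    decide +revert
  simp only [leeWt, nCount, Pi.smul_apply, smul_eq_mul, h, ← mul_sum, sum_add_distrib, sum_boole,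
    Nat.cast_id]

lemma hWt_res2 (x : ι → ZMod 4) : hWt (res2 x) = nCount 1 x + nCount 3 x := by
  have h (a : ZMod 4) :
      (if ZMod.castHom (by norm_num : (2:ℕ) ∣ 4) (ZMod 2) a ≠ 0 then 1 else 0) =
        (if a = 1 then 1 else 0) + (if a = 3 then 1 else 0) := by
    decide +revert
  simp only [hWt, nCount, card_filter, ← sum_add_distrib]
  exact sum_congr rfl fun i _ => h (x i)

def double : ZMod 2 →+ ZMod 4 where
  toFun t := 2 * t.val
  map_zero' := by decide
  map_add' := by decide

lemma double_injective : Function.Injective double := by decide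

lemma double_mul (t : ZMod 2) (a : ZMod 4) :
    double t * a = double (t * ZMod.castHom (by norm_num : (2:ℕ) ∣ 4) (ZMod 2) a) := by
  decide +revert

lemma exists_double_eq (a : ZMod 4)
    (h : ZMod.castHom (by norm_num : (2:ℕ) ∣ 4) (ZMod 2) a = 0) :
    ∃ t, double t = a := by
  decide +revert

lemma leeWt_double_comp (u : ι → ZMod 2) : leeWt (double ∘ u) = 2 * hWt u := by
  have h (t : ZMod 2) : leeVal (double t) = 2 * if t ≠ 0 then 1 else 0 := by decide +revert
  simp only [leeWt, hWt, Function.comp_apply, h, ← mul_sum, card_filter]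

lemma sum_double_mul (u : ι → ZMod 2) (y : ι → ZMod 4) :
    ∑ i, double (u i) * y i = double (∑ i, u i * res2 y i) := by
  simp only [double_mul, map_sum, res2]

omit [Fintype ι] in
lemma exists_double_comp_eq_of_res2_eq_zero {x : ι → ZMod 4} (h : res2 x = 0) :
    ∃ u, double ∘ u = x := by
  choose u hu using fun i => exists_double_eq (x i) (congrFun h i)
  exact ⟨u, funext hu⟩

def residueCode (C : Submodule (ZMod 4) (ι → ZMod 4)) : AddSubgroup (ι → ZMod 2) :=
  C.toAddSubgroup.map
    (AddMonoidHom.compLeft (ZMod.castHom (by norm_num : (2:ℕ) ∣ 4) (ZMod 2)).toAddMonoidHom ι)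

omit [Fintype ι] in
lemma mem_residueCode {C : Submodule (ZMod 4) (ι → ZMod 4)} {b : ι → ZMod 2} :
    b ∈ residueCode C ↔ ∃ c ∈ C, res2 c = b :=
  AddSubgroup.mem_map

namespace SelfDualZ4

variable {C : Submodule (ZMod 4) (ι → ZMod 4)}

lemma sum_mul_eq_zero (hC : SelfDualZ4 C) {x y : ι → ZMod 4} (hx : x ∈ C) (hy : y ∈ C) :
    ∑ i, x i * y i = 0 :=
  (hC.subset hx : x ∈ dualZ4 (C : Set (ι → ZMod 4))) y hy

lemma mem_of_forall_sum_mul_eq_zero (hC : SelfDualZ4 C) {x : ι → ZMod 4}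
    (hx : ∀ y ∈ C, ∑ i, x i * y i = 0) : x ∈ C :=
  hC.symm.subset hx

lemma four_dvd (hC : SelfDualZ4 C) {x : ι → ZMod 4} (hx : x ∈ C) :
    4 ∣ nCount 1 x + nCount 3 x := by
  have := hC.sum_mul_eq_zero hx hx
  rwa [sum_mul_self_eq, ZMod.natCast_eq_zero_iff] at this

lemma double_comp_mem (hC : SelfDualZ4 C) {u : ι → ZMod 2}
    (hu : u ∈ dual2 (residueCode C : Set (ι → ZMod 2))) : double ∘ u ∈ C := by
  refine hC.mem_of_forall_sum_mul_eq_zero fun y hy => ?_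
  rw [Function.comp_def, sum_double_mul, hu _ (mem_residueCode.mpr ⟨y, hy, rfl⟩), map_zero]

lemma mem_dual2_of_double_comp_mem (hC : SelfDualZ4 C) {u : ι → ZMod 2}
    (hu : double ∘ u ∈ C) :
    u ∈ dual2 (residueCode C : Set (ι → ZMod 2)) := by
  rintro b hb
  obtain ⟨c, hc, rfl⟩ := mem_residueCode.mp hb
  apply double_injective
  rw [← sum_double_mul, map_zero]
  exact hC.sum_mul_eq_zero hu hc

end SelfDualZ4

variable {C : Submodule (ZMod 4) (ι → ZMod 4)} {d : ℕ}

lemma le_two_mul_nCount_one_add_nCount_three (hmin : ∀ x ∈ C, x ≠ 0 → d ≤ leeWt x)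
    {x : ι → ZMod 4} (hx : x ∈ C) (h : nCount 1 x + nCount 3 x ≠ 0) :
    d ≤ 2 * (nCount 1 x + nCount 3 x) := by
  rw [← leeWt_two_smul]
  refine hmin _ (C.smul_mem 2 hx) fun h2 => h ?_
  rw [← leeWt_eq_zero_iff, leeWt_two_smul] at h2
  omega

lemma le_two_mul_hWt_of_mem_dual2 (hC : SelfDualZ4 C)
    (hmin : ∀ x ∈ C, x ≠ 0 → d ≤ leeWt x)
    {u : ι → ZMod 2} (hu : u ∈ dual2 (residueCode C : Set (ι → ZMod 2))) (hu0 : u ≠ 0) :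
    d ≤ 2 * hWt u := by
  rw [← leeWt_double_comp]
  refine hmin _ (hC.double_comp_mem hu) fun h => hu0 ?_
  exact funext fun i => double_injective ((congrFun h i).trans (map_zero double).symm)

lemma four_dvd_and_eight_le_hWt_of_mem_residueCode (hC : SelfDualZ4 C)
    (hmin : ∀ x ∈ C, x ≠ 0 → 10 ≤ leeWt x) {b : ι → ZMod 2} (hb : b ∈ residueCode C)
    (hb0 : b ≠ 0) : 4 ∣ hWt b ∧ 8 ≤ hWt b := by
  obtain ⟨c, hc, rfl⟩ := mem_residueCode.mp hb
  have h0 : nCount 1 c + nCount 3 c ≠ 0 := hWt_res2 c ▸ (hWt_eq_zero_iff _).not.mpr hb0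
  have h4 := hC.four_dvd hc
  have := le_two_mul_nCount_one_add_nCount_three hmin hc h0
  rw [hWt_res2]
  exact ⟨h4, by omega⟩

theorem nCount_eq_of_leeWt_eq_ten (hn : Fintype.card ι = 24) (hC : SelfDualZ4 C)
    (hmin : ∀ x ∈ C, x ≠ 0 → 10 ≤ leeWt x) {x : ι → ZMod 4} (hx : x ∈ C)
    (h10 : leeWt x = 10) :
    nCount 1 x + nCount 3 x = 8 ∧ nCount 2 x = 1 := by
  have hodd : nCount 1 x + nCount 3 x ≠ 0 := by
    intro h0
    obtain ⟨u, rfl⟩ := exists_double_comp_eq_of_res2_eq_zero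
      ((hWt_eq_zero_iff _).mp ((hWt_res2 x).trans h0))
    rw [leeWt_double_comp] at h10
    refine hWt_ne_five_of_mem_dual2 hn (residueCode C)
      (fun b hb hb0 => four_dvd_and_eight_le_hWt_of_mem_residueCode hC hmin hb hb0)
      (fun v hv hv0 => ?_) (hC.mem_dual2_of_double_comp_mem hx) (by omega)
    have := le_two_mul_hWt_of_mem_dual2 hC hmin hv hv0
    omega
  have := hC.four_dvd hx
  have := le_two_mul_nCount_one_add_nCount_three hmin hx hodd
  have := leeWt_eq x
  omega

lemma twelve_le_eucWt (hC : SelfDualZ4 C) (hmin : ∀ x ∈ C, x ≠ 0 → 10 ≤ leeWt x)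
    {x : ι → ZMod 4} (hx : x ∈ C) (hx0 : x ≠ 0) : 12 ≤ eucWt x := by
  have := hC.four_dvd hx
  have := le_two_mul_nCount_one_add_nCount_three hmin hx
  have := hmin x hx hx0
  rw [leeWt_eq] at this
  rw [eucWt_eq]
  omega

lemma minLee_le_leeWt {C : Set (ι → ZMod 4)} {x : ι → ZMod 4} (hx : x ∈ C) (hx0 : x ≠ 0) :
    minLee C ≤ leeWt x :=
  Nat.sInf_le ⟨x, hx, hx0, rfl⟩

lemma exists_leeWt_eq_minLee {C : Set (ι → ZMod 4)} (h : 0 < minLee C) :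
    ∃ x ∈ C, x ≠ 0 ∧ leeWt x = minLee C :=
  Nat.sInf_mem (Nat.nonempty_of_pos_sInf h)

lemma minEuc_eq_of_forall_le {C : Set (ι → ZMod 4)} {x : ι → ZMod 4} (hx : x ∈ C)
    (hx0 : x ≠ 0) (hle : ∀ y ∈ C, y ≠ 0 → eucWt x ≤ eucWt y) : minEuc C = eucWt x :=
  le_antisymm (Nat.sInf_le ⟨x, hx, hx0, rfl⟩)
    (le_csInf ⟨_, x, hx, hx0, rfl⟩ fun _ ⟨y, hy, hy0, hyd⟩ => hyd ▸ hle y hy hy0)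

end Z4Note

open Z4Note in
/-- a self-dual `ZMod 4`-code of length 24 with minimum Lee weight 10 is
Type I with minimum Euclidean weight 12, and every codeword of Lee weight 10 has
`n₁ + n₃ = 8` and `n₂ = 1`. -/
theorem selfdual_Z4_length24_minLee10
    (C : Submodule (ZMod 4) (Fin 24 → ZMod 4))
    (hsd : SelfDualZ4 C)
    (hlee : minLee (C : Set (Fin 24 → ZMod 4)) = 10) :
    ¬ TypeII (C : Set (Fin 24 → ZMod 4)) ∧
    minEuc (C : Set (Fin 24 → ZMod 4)) = 12 ∧
    ∀ x ∈ C, leeWt x = 10 → nCount 1 x + nCount 3 x = 8 ∧ nCount 2 x = 1 := by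
  have hmin (x) (hx : x ∈ C) (hx0 : x ≠ 0) : 10 ≤ leeWt x := by
    rw [← hlee]
    exact minLee_le_leeWt hx hx0
  obtain ⟨x₀, hx₀, hx₀0, hx₀lee⟩ :=
    exists_leeWt_eq_minLee (C := (C : Set (Fin 24 → ZMod 4))) (by rw [hlee]; norm_num)
  rw [hlee] at hx₀lee
  have hshape (x) (hx : x ∈ C) := nCount_eq_of_leeWt_eq_ten (Fintype.card_fin 24) hsd hmin hx
  have heuc : eucWt x₀ = 12 := by
    have := hshape x₀ hx₀ hx₀lee
    rw [eucWt_eq]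
    omega
  have hle (y) (hy : y ∈ C) (hy0 : y ≠ 0) : eucWt x₀ ≤ eucWt y := by
    rw [heuc]
    exact twelve_le_eucWt hsd hmin hy hy0
  refine ⟨fun hII => ?_, by rw [minEuc_eq_of_forall_le hx₀ hx₀0 hle, heuc], hshape⟩
  have := hII x₀ hx₀
  rw [heuc] at this
  norm_num at this
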